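/- arXiv:2008.11551 — 2 statements merged into one kernel-verified Lean document; each statement's English description precedes it below -/
import Mathlib

section
/- Let β ∈ (0,1), φ₀(x) = −(1/(2π(1−β)))·log(1 + (π/(2(1−β)))|x|^{2(1−β)}) and let B_R⁺ denote the upper half-disc of radius R centered at 0. Then ∫_{B_R⁺} |∇φ₀|² dx = (1/π)·log R + (1/(2π(1−β)))·log(π/(2(1−β))) − 1/(2π(1−β)) + o(1) as R → ∞. -/
/-!
`φ₀` is radial: `φ₀ x = h ‖x‖` with `h r = a log (1 + c r^q)`, where `a = -1/(2π(1-β))`,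
`c = π/(2(1-β))`, `q = 2(1-β)`. Hence `|∇φ₀| = |h'(‖x‖)|`, and polar coordinates turn the
energy on `B_R⁺` into `π ∫₀ᴿ r h'(r)² dr`. The substitution `u = c r^q` makes this integral
elementary, with exact value `π a² q (log (1 + c R^q) + (1 + c R^q)⁻¹ - 1)`, and `π a² q = -a`.
As `R → ∞`, `(1 + c R^q)⁻¹ → 0` and `log (1 + c R^q) = log c + q log R + o(1)`, where
`-a q = 1/π`.
-/

open Real MeasureTheory Set Filter
noncomputable section
abbrev E2 := EuclideanSpace ℝ (Fin 2)

theorem norm_fderiv_comp_norm {E : Type*} [NormedAddCommGroup E] [NormedSpace ℝ E] [Nontrivial E]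
    {h : ℝ → ℝ} {x : E} (hh : DifferentiableAt ℝ h ‖x‖) (hn : DifferentiableAt ℝ (‖·‖) x) :
    ‖fderiv ℝ (fun y => h ‖y‖) x‖ = |deriv h ‖x‖| := by
  change ‖fderiv ℝ (h ∘ (‖·‖)) x‖ = _
  rw [(hh.hasDerivAt.comp_hasFDerivAt x hn.hasFDerivAt).fderiv, norm_smul, norm_fderiv_norm hn,
    mul_one, Real.norm_eq_abs]

theorem Complex.polarCoord_symm_mem_upperHalfDisc_iff {R : ℝ} {q : ℝ × ℝ}
    (hq : q ∈ polarCoord.target) :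
    Complex.polarCoord.symm q ∈ {z : ℂ | ‖z‖ < R ∧ 0 < z.im} ↔ q ∈ Ioo 0 R ×ˢ Ioo 0 π := by
  obtain ⟨r, θ⟩ := q
  obtain ⟨hr, hθ₁, hθ₂⟩ : 0 < r ∧ -π < θ ∧ θ < π := by simpa [polarCoord_target] using hq
  have hsin : 0 < Real.sin θ ↔ 0 < θ :=
    ⟨fun h => not_le.1 fun hθ => h.not_ge (sin_nonpos_of_nonpos_of_neg_pi_le hθ hθ₁.le),
      fun h => sin_pos_of_pos_of_lt_pi h hθ₂⟩
  simp [abs_of_pos hr, mul_pos_iff_of_pos_left hr, hr, hθ₂, Complex.sin_ofReal_re, hsin]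

theorem Complex.integral_upperHalfDisc_comp_norm (f : ℝ → ℝ) (R : ℝ) :
    ∫ z in {z : ℂ | ‖z‖ < R ∧ 0 < z.im}, f ‖z‖ = π * ∫ r in Ioo 0 R, r * f r := by
  have hH : MeasurableSet {z : ℂ | ‖z‖ < R ∧ 0 < z.im} :=
    (measurableSet_lt measurable_norm measurable_const).inter
      (measurableSet_lt measurable_const Complex.measurable_im)
  have hpolar : ∀ q ∈ polarCoord.target,
      q.1 • {z : ℂ | ‖z‖ < R ∧ 0 < z.im}.indicator (fun z => f ‖z‖) (Complex.polarCoord.symm q) =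
        (Ioo 0 R ×ˢ Ioo 0 π).indicator (fun q => q.1 * f q.1) q := by
    intro q hq
    by_cases hmem : q ∈ Ioo 0 R ×ˢ Ioo 0 π
    · rw [indicator_of_mem ((polarCoord_symm_mem_upperHalfDisc_iff hq).2 hmem),
        indicator_of_mem hmem, Complex.norm_polarCoord_symm, abs_of_pos hq.1, smul_eq_mul]
    · rw [indicator_of_notMem (mt (polarCoord_symm_mem_upperHalfDisc_iff hq).1 hmem),
        indicator_of_notMem hmem, smul_zero]
  have hsub : Ioo 0 R ×ˢ Ioo 0 π ⊆ polarCoord.target :=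
    prod_mono Ioo_subset_Ioi_self (Ioo_subset_Ioo (by linarith [pi_pos]) le_rfl)
  rw [← integral_indicator hH, ← Complex.integral_comp_polarCoord_symm,
    setIntegral_congr_fun polarCoord.open_target.measurableSet hpolar,
    setIntegral_indicator (measurableSet_Ioo.prod measurableSet_Ioo), inter_eq_right.2 hsub,
    Measure.volume_eq_prod]
  simpa [pi_pos.le, mul_comm] using setIntegral_prod_mul (μ := volume) (ν := volume)
    (fun r => r * f r) (fun _ => (1 : ℝ)) (Ioo 0 R) (Ioo 0 π)

theorem integral_upperHalfDisc_comp_norm (f : ℝ → ℝ) (R : ℝ) :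
    ∫ x in {x : E2 | ‖x‖ < R ∧ 0 < x 1}, f ‖x‖ = π * ∫ r in Ioo 0 R, r * f r := by
  let e : ℂ ≃ₗᵢ[ℝ] E2 := Complex.orthonormalBasisOneI.repr
  have hpre : e ⁻¹' {x : E2 | ‖x‖ < R ∧ 0 < x 1} = {z : ℂ | ‖z‖ < R ∧ 0 < z.im} := by
    ext z
    simp [e, Complex.orthonormalBasisOneI_repr_apply]
  rw [← Complex.integral_upperHalfDisc_comp_norm, ← hpre, ←
    e.measurePreserving.setIntegral_preimage_emb e.toMeasurableEquiv.measurableEmbedding]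
  simp only [LinearIsometryEquiv.norm_map]

theorem integral_upperHalfDisc_norm_fderiv_comp_norm_sq {h : ℝ → ℝ}
    (hh : ∀ r, 0 < r → DifferentiableAt ℝ h r) (R : ℝ) :
    ∫ x in {x : E2 | ‖x‖ < R ∧ 0 < x 1}, ‖fderiv ℝ (fun y => h ‖y‖) x‖ ^ 2 =
      π * ∫ r in Ioo 0 R, r * deriv h r ^ 2 := by
  rw [← integral_upperHalfDisc_comp_norm]
  refine setIntegral_congr_fun
    ((measurableSet_lt measurable_norm measurable_const).inter
      (measurableSet_lt measurable_const
        (EuclideanSpace.proj (1 : Fin 2)).continuous.measurable)) ?_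
  rintro x ⟨-, hx⟩
  have hx0 : x ≠ 0 := by rintro rfl; simp at hx
  dsimp only
  rw [norm_fderiv_comp_norm (hh _ (norm_pos_iff.2 hx0))
    ((contDiffAt_norm (n := 1) ℝ hx0).differentiableAt one_ne_zero), sq_abs]

def logProfile (a c q r : ℝ) : ℝ := a * log (1 + c * r ^ q)

section logProfile

variable {a c q r : ℝ}

theorem hasDerivAt_logProfile (hc : 0 ≤ c) (hr : 0 < r) :
    HasDerivAt (logProfile a c q) (a * (c * (q * r ^ (q - 1)) / (1 + c * r ^ q))) r := by
  have hpos : 0 < 1 + c * r ^ q := by positivity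
  exact ((((hasDerivAt_rpow_const (Or.inl hr.ne')).const_mul c).const_add 1).log
    hpos.ne').const_mul a

-- A primitive of `r * deriv (logProfile a c q) r ^ 2`: with `u = c r^q` the integrand becomes
-- `a² q u u' / (1 + u)²`, and `d/du (log (1 + u) + (1 + u)⁻¹) = u / (1 + u)²`.
theorem hasDerivAt_logProfile_energy (hc : 0 ≤ c) (hr : 0 < r) :
    HasDerivAt (fun r => a ^ 2 * q * (log (1 + c * r ^ q) + (1 + c * r ^ q)⁻¹))
      (r * (a * (c * (q * r ^ (q - 1)) / (1 + c * r ^ q))) ^ 2) r := by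
  have hpos : 0 < 1 + c * r ^ q := by positivity
  have hu := ((hasDerivAt_rpow_const (p := q) (Or.inl hr.ne')).const_mul c).const_add 1
  refine (((hu.log hpos.ne').add (hu.inv hpos.ne')).const_mul (a ^ 2 * q)).congr_deriv ?_
  have hrq : r * r ^ (q - 1) = r ^ q := by
    rw [mul_comm, ← rpow_add_one hr.ne', sub_add_cancel]
  field_simp
  rw [← hrq]
  ring

theorem continuousOn_logProfile_energy (hc : 0 ≤ c) (hq : 0 < q) (R : ℝ) :
    ContinuousOn (fun r => a ^ 2 * q * (log (1 + c * r ^ q) + (1 + c * r ^ q)⁻¹)) (Icc 0 R) := by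
  have hu : Continuous fun r : ℝ => 1 + c * r ^ q := by
    have := continuous_rpow_const hq.le
    fun_prop
  have hne : ∀ r ∈ Icc (0 : ℝ) R, 1 + c * r ^ q ≠ 0 := fun r hr =>
    (by have := rpow_nonneg hr.1 q; positivity : 0 < 1 + c * r ^ q).ne'
  exact continuousOn_const.mul ((hu.continuousOn.log hne).add (hu.continuousOn.inv₀ hne))

theorem integral_mul_deriv_logProfile_sq (a : ℝ) (hc : 0 ≤ c) (hq : 0 < q) {R : ℝ} (hR : 0 ≤ R) :
    ∫ r in Ioo 0 R, r * deriv (logProfile a c q) r ^ 2 =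
      a ^ 2 * q * (log (1 + c * R ^ q) + (1 + c * R ^ q)⁻¹ - 1) := by
  have hderiv : ∀ r ∈ Ioo 0 R, r * deriv (logProfile a c q) r ^ 2 =
      r * (a * (c * (q * r ^ (q - 1)) / (1 + c * r ^ q))) ^ 2 := fun r hr => by
    rw [(hasDerivAt_logProfile hc hr.1).deriv]
  have hF := fun r (hr : r ∈ Ioo 0 R) => hasDerivAt_logProfile_energy (a := a) (q := q) hc hr.1
  have hcont := continuousOn_logProfile_energy (a := a) hc hq R
  have hint := intervalIntegral.integrableOn_deriv_of_nonneg hcont hF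
    fun r hr => mul_nonneg hr.1.le (sq_nonneg _)
  rw [setIntegral_congr_fun measurableSet_Ioo hderiv, ← integral_Ioc_eq_integral_Ioo,
    ← intervalIntegral.integral_of_le hR, intervalIntegral.integral_eq_sub_of_hasDerivAt_of_le hR
      hcont hF ((intervalIntegrable_iff_integrableOn_Ioc_of_le hR).2 hint),
    zero_rpow hq.ne']
  simp only [mul_zero, add_zero, log_one, inv_one, zero_add]
  ring

end logProfile

theorem tendsto_log_one_add_sub_log_atTop :
    Tendsto (fun t => log (1 + t) - log t) atTop (nhds 0) := by
  have h₁ : Tendsto (fun t : ℝ => 1 + t⁻¹) atTop (nhds 1) := by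
    simpa using (tendsto_inv_atTop_zero (𝕜 := ℝ)).const_add 1
  have h : Tendsto (fun t : ℝ => log (1 + t⁻¹)) atTop (nhds 0) := by
    simpa [Function.comp_def] using (continuousAt_log one_ne_zero).tendsto.comp h₁
  refine h.congr' ?_
  filter_upwards [eventually_gt_atTop 0] with t ht
  rw [← log_div (by positivity) ht.ne', add_div, div_self ht.ne', one_div, add_comm]

theorem tendsto_log_one_add_mul_rpow_add_inv_sub {c q : ℝ} (hc : 0 < c) (hq : 0 < q) :
    Tendsto (fun R => log (1 + c * R ^ q) + (1 + c * R ^ q)⁻¹ - (log c + q * log R))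
      atTop (nhds 0) := by
  have hu : Tendsto (fun R : ℝ => c * R ^ q) atTop atTop :=
    (tendsto_rpow_atTop hq).const_mul_atTop hc
  have h := (tendsto_log_one_add_sub_log_atTop.comp hu).add
    (tendsto_inv_atTop_zero.comp (tendsto_atTop_add_const_left _ 1 hu))
  rw [add_zero] at h
  refine h.congr' ?_
  filter_upwards [eventually_gt_atTop 0] with R hR
  simp only [Function.comp_apply]
  rw [log_mul hc.ne' (by positivity), log_rpow hR]
  ring

theorem stmt5 (β : ℝ) (hβ : β ∈ Set.Ioo (0:ℝ) 1) (φ₀ : E2 → ℝ)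
    (hφ : ∀ x : E2, φ₀ x =
      -(1 / (2 * π * (1 - β))) * Real.log (1 + (π / (2 * (1 - β))) * ‖x‖ ^ (2 * (1 - β)))) :
    ∃ err : ℝ → ℝ, Tendsto err atTop (nhds 0) ∧ ∀ R : ℝ, 0 < R →
      (∫ x in {x : E2 | ‖x‖ < R ∧ 0 < x 1}, ‖fderiv ℝ φ₀ x‖ ^ 2) =
        (1 / π) * Real.log R + (1 / (2 * π * (1 - β))) * Real.log (π / (2 * (1 - β)))
          - 1 / (2 * π * (1 - β)) + err R := by
  have hp : 0 < 1 - β := sub_pos.2 hβ.2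
  have hc : 0 < π / (2 * (1 - β)) := by positivity
  have hq : 0 < 2 * (1 - β) := by positivity
  have henergy : ∀ R, 0 < R → ∫ x in {x : E2 | ‖x‖ < R ∧ 0 < x 1}, ‖fderiv ℝ φ₀ x‖ ^ 2 =
      1 / (2 * π * (1 - β)) * (log (1 + π / (2 * (1 - β)) * R ^ (2 * (1 - β))) +
        (1 + π / (2 * (1 - β)) * R ^ (2 * (1 - β)))⁻¹ - 1) := fun R hR => by
    rw [show φ₀ = fun x => logProfile _ _ _ ‖x‖ from funext hφ,
      integral_upperHalfDisc_norm_fderiv_comp_norm_sq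
        (fun r hr => (hasDerivAt_logProfile hc.le hr).differentiableAt),
      integral_mul_deriv_logProfile_sq _ hc.le hq hR.le]
    field_simp
  refine ⟨fun R => (∫ x in {x : E2 | ‖x‖ < R ∧ 0 < x 1}, ‖fderiv ℝ φ₀ x‖ ^ 2) -
    ((1 / π) * log R + (1 / (2 * π * (1 - β))) * log (π / (2 * (1 - β)))
      - 1 / (2 * π * (1 - β))), ?_, fun R _ => by ring⟩
  have h := (tendsto_log_one_add_mul_rpow_add_inv_sub hc hq).const_mul (1 / (2 * π * (1 - β)))
  rw [mul_zero] at h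
  refine h.congr' ?_
  filter_upwards [eventually_gt_atTop 0] with R hR
  rw [henergy R hR]
  field_simp
  ring
end
end

section
/- Let β ∈ (0,1), δ > 0, α > 2π(1−β), and for 0 < l < δ let u_l be the Moser function with u_l = (1/√π)√(log(δ/l)) on B_l⁺(0). Then ∫_{B_l⁺(0)} |x|^{−2β} e^{α u_l²} dx ≥ (π/(2(1−β))) · δ^{α/π} · l^{2(1−β) − α/π}, and in particular this quantity tends to +∞ as l → 0⁺ when α > 2π(1−β). -/
open Real MeasureTheory Set Filter
noncomputable section
/-!
On the half-disc the Moser function is constant, with `exp (α u²) = (δ / l) ^ (α / π)`, and in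
polar coordinates the half-disc integral of `|x| ^ (-2β)` is `π l ^ (2 - 2β) / (2 - 2β)`. Their
product is exactly the claimed lower bound, whose exponent `2(1 - β) - α / π` is negative
precisely when `α > 2π(1 - β)`.
-/

lemma Ioo_neg_pi_pi_inter_sin_pos : Ioo (-π) π ∩ {θ | 0 < sin θ} = Ioo 0 π := by
  ext θ
  refine ⟨fun ⟨⟨_, hθπ⟩, hsin⟩ => ⟨?_, hθπ⟩,
    fun ⟨h0, hπ⟩ => ⟨⟨by linarith, hπ⟩, sin_pos_of_pos_of_lt_pi h0 hπ⟩⟩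
  by_contra! hθ
  exact (sin_nonpos_of_nonpos_of_neg_pi_le hθ (by linarith)).not_gt hsin

lemma integral_Ioo_neg_pi_pi_indicator_sin_pos :
    ∫ θ in Ioo (-π) π, {θ | 0 < sin θ}.indicator 1 θ = π := by
  rw [integral_indicator_one (measurableSet_lt measurable_const measurable_sin),
    Measure.real_def, Measure.restrict_apply (measurableSet_lt measurable_const measurable_sin),
    inter_comm, Ioo_neg_pi_pi_inter_sin_pos, Real.volume_Ioo, sub_zero,
    ENNReal.toReal_ofReal pi_pos.le]

lemma measurableSet_upperHalfBall (l : ℝ) : MeasurableSet {x : E2 | ‖x‖ < l ∧ 0 < x 1} := by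
  measurability

lemma EuclideanSpace.norm_eq_sqrt_sq_add_sq (x : E2) : ‖x‖ = √(x 0 ^ 2 + x 1 ^ 2) := by
  simp [EuclideanSpace.norm_eq, Fin.sum_univ_two]

lemma integral_fun_norm_upperHalfBall (f : ℝ → ℝ) (l : ℝ) :
    ∫ x in {x : E2 | ‖x‖ < l ∧ 0 < x 1}, f ‖x‖ = π * ∫ r in Ioo 0 l, r * f r := by
  set S : Set (ℝ × ℝ) := {y | √(y.1 ^ 2 + y.2 ^ 2) < l ∧ 0 < y.2}
  have hS : MeasurableSet S := by measurability
  have hφ : MeasurePreserving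
      ((MeasurableEquiv.toLp 2 (Fin 2 → ℝ)).symm.trans MeasurableEquiv.finTwoArrow) :=
    (volume_preserving_finTwoArrow ℝ).comp
      (EuclideanSpace.volume_preserving_symm_measurableEquiv_toLp (Fin 2))
  -- For `r > 0` the condition `0 < r sin θ` only involves `θ`, so the integrand separates.
  have hpolar : ∀ p ∈ polarCoord.target,
      p.1 • S.indicator (fun y => f √(y.1 ^ 2 + y.2 ^ 2)) (polarCoord.symm p)
        = (Ioo 0 l).indicator (fun r => r * f r) p.1 * {θ | 0 < sin θ}.indicator 1 p.2 := by
    rintro ⟨r, θ⟩ ⟨hr, -⟩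
    have hr : 0 < r := hr
    have hnorm : √((r * cos θ) ^ 2 + (r * sin θ) ^ 2) = r := by
      rw [mul_pow, mul_pow, ← mul_add, cos_sq_add_sin_sq, mul_one, sqrt_sq hr.le]
    simp only [polarCoord_symm_apply, S, indicator_apply, mem_ofPred_eq, mem_Ioo, hnorm,
      mul_pos_iff_of_pos_left hr, hr, true_and, smul_eq_mul, Pi.one_apply]
    split_ifs <;> simp_all
  calc ∫ x in {x : E2 | ‖x‖ < l ∧ 0 < x 1}, f ‖x‖
      = ∫ y in S, f √(y.1 ^ 2 + y.2 ^ 2) := by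
        rw [← hφ.setIntegral_preimage_emb (MeasurableEquiv.measurableEmbedding _)]
        simp_rw [EuclideanSpace.norm_eq_sqrt_sq_add_sq]
        rfl
    _ = ∫ p in polarCoord.target,
          p.1 • S.indicator (fun y => f √(y.1 ^ 2 + y.2 ^ 2)) (polarCoord.symm p) := by
        rw [← integral_indicator hS, integral_comp_polarCoord_symm]
    _ = ∫ p in Ioi 0 ×ˢ Ioo (-π) π,
          (Ioo 0 l).indicator (fun r => r * f r) p.1 * {θ | 0 < sin θ}.indicator 1 p.2 :=
        setIntegral_congr_fun polarCoord.open_target.measurableSet hpolar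
    _ = π * ∫ r in Ioo 0 l, r * f r := by
        rw [Measure.volume_eq_prod, setIntegral_prod_mul, integral_Ioo_neg_pi_pi_indicator_sin_pos,
          setIntegral_indicator measurableSet_Ioo,
          inter_eq_self_of_subset_right Ioo_subset_Ioi_self, mul_comm]

lemma integral_norm_rpow_upperHalfBall {p l : ℝ} (hp : -2 < p) (hl : 0 < l) :
    ∫ x in {x : E2 | ‖x‖ < l ∧ 0 < x 1}, ‖x‖ ^ p = π * (l ^ (p + 2) / (p + 2)) := by
  calc ∫ x in {x : E2 | ‖x‖ < l ∧ 0 < x 1}, ‖x‖ ^ p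
      = π * ∫ r in Ioo 0 l, r ^ (p + 1) := by
        rw [integral_fun_norm_upperHalfBall (· ^ p)]
        congr 1
        exact setIntegral_congr_fun measurableSet_Ioo fun r hr => by
          rw [rpow_add_one hr.1.ne', mul_comm]
    _ = π * (l ^ (p + 2) / (p + 2)) := by
        rw [← integral_Ioc_eq_integral_Ioo, ← intervalIntegral.integral_of_le hl.le,
          integral_rpow (Or.inl (by linarith)), show p + 1 + 1 = p + 2 by ring,
          zero_rpow (by linarith), sub_zero]

lemma exp_mul_sq_one_div_sqrt_mul_sqrt_log {c x : ℝ} (hc : 0 ≤ c) (hx : 1 ≤ x) (α : ℝ) :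
    exp (α * (1 / √c * √(log x)) ^ 2) = x ^ (α / c) := by
  rw [mul_pow, div_pow, one_pow, sq_sqrt hc, sq_sqrt (log_nonneg hx),
    rpow_def_of_pos (by linarith), mul_comm (log x)]
  ring_nf

theorem stmt7 (β δ α : ℝ) (hβ : β ∈ Set.Ioo (0:ℝ) 1) (hδ : 0 < δ)
    (hα : 2 * π * (1 - β) < α) :
    (∀ l ∈ Set.Ioo (0:ℝ) δ, ∀ u : E2 → ℝ,
      (∀ x : E2, ‖x‖ ≤ l → u x = (1 / Real.sqrt π) * Real.sqrt (Real.log (δ / l))) →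
      (π / (2 * (1 - β))) * δ ^ (α / π) * l ^ (2 * (1 - β) - α / π) ≤
        ∫ x in {x : E2 | ‖x‖ < l ∧ 0 < x 1}, ‖x‖ ^ (-(2 * β)) * Real.exp (α * u x ^ 2)) ∧
    Tendsto (fun l : ℝ => (π / (2 * (1 - β))) * δ ^ (α / π) * l ^ (2 * (1 - β) - α / π))
      (nhdsWithin 0 (Set.Ioi 0)) atTop := by
  obtain ⟨hβ0, hβ1⟩ := hβ
  refine ⟨fun l ⟨hl, hlδ⟩ u hu => le_of_eq ?_, ?_⟩
  · have hu_exp : ∀ x ∈ {x : E2 | ‖x‖ < l ∧ 0 < x 1},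
        ‖x‖ ^ (-(2 * β)) * exp (α * u x ^ 2) = ‖x‖ ^ (-(2 * β)) * (δ / l) ^ (α / π) :=
      fun x hx => by
        rw [hu x hx.1.le, exp_mul_sq_one_div_sqrt_mul_sqrt_log pi_pos.le
          ((one_le_div hl).2 hlδ.le)]
    rw [setIntegral_congr_fun (measurableSet_upperHalfBall l) hu_exp, integral_mul_const,
      integral_norm_rpow_upperHalfBall (by linarith) hl, show -(2 * β) + 2 = 2 * (1 - β) by ring,
      div_rpow hδ.le hl.le, rpow_sub hl]
    have : 2 * (1 - β) ≠ 0 := by linarith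
    field_simp
  · have hexponent : 2 * (1 - β) - α / π < 0 := by
      rw [sub_neg, lt_div_iff₀ pi_pos]
      linarith
    exact (tendsto_rpow_neg_nhdsGT_zero hexponent).const_mul_atTop
      (mul_pos (div_pos pi_pos (by linarith)) (rpow_pos_of_pos hδ _))
end
end
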